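/- Let α : ℝ → ℝ be smooth, let U ⊆ ℝ² be open, and let u : U → ℝ be a smooth solution of the generalized Hunter–Saxton type equation u_{tx} + u·u_{xx} + α(u_x) = 0 on U. Let W ⊆ ℝ² be an open set containing {(t, u_x(t,x)) : (t,x) ∈ U} and let h : W → ℝ be smooth with u_{xx}(t,x) = h(t, u_x(t,x)) for all (t,x) ∈ U. Then for every (t,x) ∈ U, writing J = u_x(t,x), one has ∂₁h(t,J) − α(J)·∂₂h(t,J) + (J + α'(J))·h(t,J) = 0. -/

import Mathlib

open Real

/-- Partial derivative of a function of two real variables w.r.t. its first argument. -/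
noncomputable def d1 (f : ℝ → ℝ → ℝ) (a b : ℝ) : ℝ := deriv (fun s => f s b) a

/-- Partial derivative of a function of two real variables w.r.t. its second argument. -/
noncomputable def d2 (f : ℝ → ℝ → ℝ) (a b : ℝ) : ℝ := deriv (fun s => f a s) b

/-- A function of two real variables is smooth (infinitely differentiable). -/
def Smooth2 (f : ℝ → ℝ → ℝ) : Prop := ContDiff ℝ (⊤ : ℕ∞) (fun p : ℝ × ℝ => f p.1 p.2)

/-- A function of two real variables is smooth on a set `U ⊆ ℝ²`. -/
def Smooth2On (f : ℝ → ℝ → ℝ) (U : Set (ℝ × ℝ)) : Prop :=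
  ContDiffOn ℝ (⊤ : ℕ∞) (fun p : ℝ × ℝ => f p.1 p.2) U

/-!
Write `J = u_x`. Differentiating `u_{xx} = h(t, u_x)` in `x` and in `t` gives
`u_{xxx} = h_J u_{xx}` and `u_{xxt} = h_I + u_{tx} h_J`. Differentiating the equation in `x` and
using `u_{txx} = u_{xxt}` gives `u_{xxt} + u_x u_{xx} + u u_{xxx} + α'(u_x) u_{xx} = 0`.
Substituting the first two identities and then `u_{tx} + u h = -α(J)` from the equation itself
leaves `h_I - α(J) h_J + (J + α'(J)) h = 0`.
-/

open Function Filter Topology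

section PartialDerivatives

variable {f g : ℝ → ℝ → ℝ} {a b : ℝ}

theorem hasDerivAt_d1 (hf : DifferentiableAt ℝ (uncurry f) (a, b)) :
    HasDerivAt (fun s => f s b) (d1 f a b) a := by
  have hc : HasDerivAt (fun s : ℝ => (s, b)) ((1 : ℝ), (0 : ℝ)) a :=
    (hasDerivAt_id' a).prodMk (hasDerivAt_const a b)
  exact (hf.comp a hc.differentiableAt).hasDerivAt

theorem hasDerivAt_d2 (hf : DifferentiableAt ℝ (uncurry f) (a, b)) :
    HasDerivAt (fun s => f a s) (d2 f a b) b := by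
  have hc : HasDerivAt (fun s : ℝ => (a, s)) ((0 : ℝ), (1 : ℝ)) b :=
    (hasDerivAt_const b a).prodMk (hasDerivAt_id' b)
  exact (hf.comp b hc.differentiableAt).hasDerivAt

theorem HasFDerivAt.d1_eq {L : ℝ × ℝ →L[ℝ] ℝ} (hf : HasFDerivAt (uncurry f) L (a, b)) :
    d1 f a b = L (1, 0) := by
  have hc : HasDerivAt (fun s : ℝ => (s, b)) ((1 : ℝ), (0 : ℝ)) a :=
    (hasDerivAt_id' a).prodMk (hasDerivAt_const a b)
  exact (hf.comp_hasDerivAt a hc).deriv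

theorem HasFDerivAt.d2_eq {L : ℝ × ℝ →L[ℝ] ℝ} (hf : HasFDerivAt (uncurry f) L (a, b)) :
    d2 f a b = L (0, 1) := by
  have hc : HasDerivAt (fun s : ℝ => (a, s)) ((0 : ℝ), (1 : ℝ)) b :=
    (hasDerivAt_const b a).prodMk (hasDerivAt_id' b)
  exact (hf.comp_hasDerivAt b hc).deriv

theorem Filter.EventuallyEq.d1_eq (h : uncurry f =ᶠ[𝓝 (a, b)] uncurry g) :
    d1 f a b = d1 g a b :=
  (h.comp_tendsto ((Continuous.prodMk_left b).tendsto a)).deriv_eq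

theorem Filter.EventuallyEq.d2_eq (h : uncurry f =ᶠ[𝓝 (a, b)] uncurry g) :
    d2 f a b = d2 g a b :=
  (h.comp_tendsto ((Continuous.prodMk_right a).tendsto b)).deriv_eq

theorem hasDerivAt_comp_d1_d2 {γ δ : ℝ → ℝ} {γ' δ' s : ℝ}
    (hf : DifferentiableAt ℝ (uncurry f) (γ s, δ s))
    (hγ : HasDerivAt γ γ' s) (hδ : HasDerivAt δ δ' s) :
    HasDerivAt (fun r => f (γ r) (δ r))
      (γ' * d1 f (γ s) (δ s) + δ' * d2 f (γ s) (δ s)) s := by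
  have hsplit : ((γ', δ') : ℝ × ℝ) = γ' • ((1 : ℝ), (0 : ℝ)) + δ' • ((0 : ℝ), (1 : ℝ)) := by
    simp
  have hcomp := hf.hasFDerivAt.comp_hasDerivAt s (hγ.prodMk hδ)
  rwa [hsplit, map_add, map_smul, map_smul, smul_eq_mul, smul_eq_mul,
    ← hf.hasFDerivAt.d1_eq, ← hf.hasFDerivAt.d2_eq] at hcomp

theorem d1_comp_right {h v : ℝ → ℝ → ℝ} (hh : DifferentiableAt ℝ (uncurry h) (a, v a b))
    (hv : DifferentiableAt ℝ (uncurry v) (a, b)) :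
    d1 (fun s r => h s (v s r)) a b = d1 h a (v a b) + d1 v a b * d2 h a (v a b) := by
  show deriv (fun r => h r (v r b)) a = _
  simpa using (hasDerivAt_comp_d1_d2 hh (hasDerivAt_id' a) (hasDerivAt_d1 hv)).deriv

theorem d2_comp_right {h v : ℝ → ℝ → ℝ} (hh : DifferentiableAt ℝ (uncurry h) (a, v a b))
    (hv : DifferentiableAt ℝ (uncurry v) (a, b)) :
    d2 (fun s r => h s (v s r)) a b = d2 v a b * d2 h a (v a b) := by
  show deriv (fun r => h a (v a r)) b = _
  simpa using (hasDerivAt_comp_d1_d2 hh (hasDerivAt_const b a) (hasDerivAt_d2 hv)).deriv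

theorem d1_d2_eq_fderiv_fderiv (hf : ContDiffAt ℝ 2 (uncurry f) (a, b)) :
    d1 (d2 f) a b = fderiv ℝ (fderiv ℝ (uncurry f)) (a, b) (1, 0) (0, 1) := by
  have hdiff : DifferentiableAt ℝ (fderiv ℝ (uncurry f)) (a, b) :=
    (hf.fderiv_right (m := 1) le_rfl).differentiableAt one_ne_zero
  have hd2 :
      uncurry (d2 f) =ᶠ[𝓝 (a, b)] uncurry fun s r => fderiv ℝ (uncurry f) (s, r) (0, 1) :=
    (hf.eventually (by simp)).mono fun q hq => (hq.differentiableAt (by simp)).hasFDerivAt.d2_eq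
  rw [hd2.d1_eq]
  have hL := hdiff.hasFDerivAt.clm_apply (hasFDerivAt_const ((0 : ℝ), (1 : ℝ)) (a, b))
  rw [HasFDerivAt.d1_eq (f := fun s r => fderiv ℝ (uncurry f) (s, r) (0, 1)) hL]
  simp

theorem d2_d1_eq_fderiv_fderiv (hf : ContDiffAt ℝ 2 (uncurry f) (a, b)) :
    d2 (d1 f) a b = fderiv ℝ (fderiv ℝ (uncurry f)) (a, b) (0, 1) (1, 0) := by
  have hdiff : DifferentiableAt ℝ (fderiv ℝ (uncurry f)) (a, b) :=
    (hf.fderiv_right (m := 1) le_rfl).differentiableAt one_ne_zero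
  have hd1 :
      uncurry (d1 f) =ᶠ[𝓝 (a, b)] uncurry fun s r => fderiv ℝ (uncurry f) (s, r) (1, 0) :=
    (hf.eventually (by simp)).mono fun q hq => (hq.differentiableAt (by simp)).hasFDerivAt.d1_eq
  rw [hd1.d2_eq]
  have hL := hdiff.hasFDerivAt.clm_apply (hasFDerivAt_const ((1 : ℝ), (0 : ℝ)) (a, b))
  rw [HasFDerivAt.d2_eq (f := fun s r => fderiv ℝ (uncurry f) (s, r) (1, 0)) hL]
  simp

theorem d1_d2_comm (hf : ContDiffAt ℝ 2 (uncurry f) (a, b)) :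
    d1 (d2 f) a b = d2 (d1 f) a b := by
  rw [d1_d2_eq_fderiv_fderiv hf, d2_d1_eq_fderiv_fderiv hf]
  exact hf.isSymmSndFDerivAt (by simp [minSmoothness_of_isRCLikeNormedField]) _ _

end PartialDerivatives

section Smooth2On

variable {f : ℝ → ℝ → ℝ} {U : Set (ℝ × ℝ)}

theorem Smooth2On.contDiffAt (hf : Smooth2On f U) (hU : IsOpen U) {p : ℝ × ℝ} (hp : p ∈ U) :
    ContDiffAt ℝ (⊤ : ℕ∞) (uncurry f) p :=
  ContDiffOn.contDiffAt (f := uncurry f) hf (hU.mem_nhds hp)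

theorem Smooth2On.differentiableAt (hf : Smooth2On f U) (hU : IsOpen U) {p : ℝ × ℝ}
    (hp : p ∈ U) : DifferentiableAt ℝ (uncurry f) p :=
  (hf.contDiffAt hU hp).differentiableAt (by simp)

theorem smooth2On_d1 (hf : Smooth2On f U) (hU : IsOpen U) : Smooth2On (d1 f) U := by
  have hF : ContDiffOn ℝ (⊤ : ℕ∞) (fderiv ℝ (uncurry f)) U :=
    ContDiffOn.fderiv_of_isOpen hf hU (by exact_mod_cast le_top)
  have hd : ContDiffOn ℝ (⊤ : ℕ∞) (fun q => fderiv ℝ (uncurry f) q (1, 0)) U :=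
    hF.clm_apply contDiffOn_const
  exact hd.congr fun ⟨s, r⟩ hq => (hf.differentiableAt hU hq).hasFDerivAt.d1_eq

theorem smooth2On_d2 (hf : Smooth2On f U) (hU : IsOpen U) : Smooth2On (d2 f) U := by
  have hF : ContDiffOn ℝ (⊤ : ℕ∞) (fderiv ℝ (uncurry f)) U :=
    ContDiffOn.fderiv_of_isOpen hf hU (by exact_mod_cast le_top)
  have hd : ContDiffOn ℝ (⊤ : ℕ∞) (fun q => fderiv ℝ (uncurry f) q (0, 1)) U :=
    hF.clm_apply contDiffOn_const
  exact hd.congr fun ⟨s, r⟩ hq => (hf.differentiableAt hU hq).hasFDerivAt.d2_eq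

end Smooth2On

theorem d2_hunterSaxton {α : ℝ → ℝ} (hα : Differentiable ℝ α) {u : ℝ → ℝ → ℝ}
    {U : Set (ℝ × ℝ)} (hU : IsOpen U) (hu : Smooth2On u U) {a b : ℝ} (hp : (a, b) ∈ U) :
    d2 (fun t x => d1 (d2 u) t x + u t x * d2 (d2 u) t x + α (d2 u t x)) a b
      = d1 (d2 (d2 u)) a b + d2 u a b * d2 (d2 u) a b + u a b * d2 (d2 (d2 u)) a b
        + deriv α (d2 u a b) * d2 (d2 u) a b := by
  have hu2 := smooth2On_d2 hu hU
  have hx : ∀ g, Smooth2On g U → HasDerivAt (fun x => g a x) (d2 g a b) b :=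
    fun g hg => hasDerivAt_d2 (hg.differentiableAt hU hp)
  have hsum := ((hx _ (smooth2On_d1 hu2 hU)).add ((hx u hu).mul (hx _ (smooth2On_d2 hu2 hU)))).add
    ((hα _).hasDerivAt.comp b (hx _ hu2))
  rw [d1_d2_comm ((hu2.contDiffAt hU hp).of_le (WithTop.coe_le_coe.mpr le_top))]
  exact hsum.deriv.trans (by ring)

/-- Quotient of the generalized Hunter–Saxton type equation
`u_{tx} + u·u_{xx} + α(u_x) = 0`: along a solution, a smooth `h` with
`u_{xx} = h(t, u_x)` satisfies `h_I − α(J) h_J + (J + α'(J)) h = 0` at `(t, u_x)`. -/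
theorem generalized_hs_quotient
    (α : ℝ → ℝ) (hα : ContDiff ℝ (⊤ : ℕ∞) α)
    (U : Set (ℝ × ℝ)) (hU : IsOpen U)
    (u : ℝ → ℝ → ℝ) (hu : Smooth2On u U)
    (hsol : ∀ p ∈ U,
      d1 (d2 u) p.1 p.2 + u p.1 p.2 * d2 (d2 u) p.1 p.2 + α (d2 u p.1 p.2) = 0)
    (W : Set (ℝ × ℝ)) (hW : IsOpen W)
    (hWsub : ∀ p ∈ U, (p.1, d2 u p.1 p.2) ∈ W)
    (h : ℝ → ℝ → ℝ) (hh : Smooth2On h W)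
    (hcon : ∀ p ∈ U, d2 (d2 u) p.1 p.2 = h p.1 (d2 u p.1 p.2)) :
    ∀ p ∈ U,
      d1 h p.1 (d2 u p.1 p.2) - α (d2 u p.1 p.2) * d2 h p.1 (d2 u p.1 p.2)
        + (d2 u p.1 p.2 + deriv α (d2 u p.1 p.2)) * h p.1 (d2 u p.1 p.2) = 0 := by
  rintro ⟨t, x⟩ hp
  have hu2 := smooth2On_d2 hu hU
  have hhJ := hh.differentiableAt hW (hWsub _ hp)
  have hcon' : uncurry (d2 (d2 u)) =ᶠ[𝓝 (t, x)] uncurry fun s r => h s (d2 u s r) :=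
    eventually_of_mem (hU.mem_nhds hp) hcon
  have hxxx : d2 (d2 (d2 u)) t x = d2 (d2 u) t x * d2 h t (d2 u t x) :=
    hcon'.d2_eq.trans (d2_comp_right hhJ (hu2.differentiableAt hU hp))
  have hxxt : d1 (d2 (d2 u)) t x = d1 h t (d2 u t x) + d1 (d2 u) t x * d2 h t (d2 u t x) :=
    hcon'.d1_eq.trans (d1_comp_right hhJ (hu2.differentiableAt hU hp))
  have hsol' : uncurry (fun t x => d1 (d2 u) t x + u t x * d2 (d2 u) t x + α (d2 u t x))
      =ᶠ[𝓝 (t, x)] uncurry fun _ _ => 0 :=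
    eventually_of_mem (hU.mem_nhds hp) hsol
  have hsol_x := (d2_hunterSaxton (hα.differentiable (by simp)) hU hu hp).symm.trans
    (hsol'.d2_eq.trans (deriv_const x 0))
  linear_combination hsol_x - hxxt - u t x * hxxx - d2 h t (d2 u t x) * hsol _ hp
    - (d2 u t x + deriv α (d2 u t x)) * hcon _ hp
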